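/- arXiv:1312.4119 — 3 statements merged into one kernel-verified Lean document; each statement's English description precedes it below -/
import Mathlib

section
/- Let (M, d) be a proper geodesic metric space, let γ be a line in M, and let x ∈ M satisfy B_γ(x) = 0. Then there exists a line γ′ in M with γ′(0) = x and γ′ ≺ γ. In particular, the zero set G_γ = {y ∈ M : B_γ(y) = 0} is the union of the images of such lines. -/
open Filter Topology

variable {M : Type*} [MetricSpace M]

/-- A ray in a metric space: a map `γ` defined (in effect) on `[0, ∞)` with
`d(γ s, γ t) = |s - t|` for all `s, t ≥ 0`. -/
def IsRay (γ : ℝ → M) : Prop :=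
  ∀ s t : ℝ, 0 ≤ s → 0 ≤ t → dist (γ s) (γ t) = |s - t|

/-- A line in a metric space: a map `γ : ℝ → M` with `d(γ s, γ t) = |s - t|`. -/
def IsLine (γ : ℝ → M) : Prop :=
  ∀ s t : ℝ, dist (γ s) (γ t) = |s - t|

/-- The Busemann function of a ray `γ`:
`b_γ(x) = lim_{t → ∞} (d(x, γ t) - t)`, which exists and equals the infimum
since `t ↦ d(x, γ t) - t` is nonincreasing on `[0, ∞)` and bounded below. -/
noncomputable def busemann (γ : ℝ → M) (x : M) : ℝ :=
  ⨅ t : Set.Ici (0 : ℝ), (dist x (γ t) - (t : ℝ))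

/-- For a line `γ`, the negative ray `γ⁻(t) = γ(-t)`.  (The positive ray `γ⁺`
is just `γ` itself, restricted to `[0, ∞)`.) -/
def negRay (γ : ℝ → M) : ℝ → M := fun t => γ (-t)

/-- The barrier function of a line `γ`: `B_γ = b_{γ⁺} + b_{γ⁻}`. -/
noncomputable def barrier (γ : ℝ → M) (x : M) : ℝ :=
  busemann γ x + busemann (negRay γ) x

/-- `γ' ≺ γ`: the barrier of `γ` vanishes at `γ' 0` and both Busemann functions
`b_{γ⁺}`, `b_{γ⁻}` calibrate `γ'` (every forward translate of `γ'` is a coray to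
`γ⁺` and every backward translate is a coray to `γ⁻`). -/
def Prec (γ' γ : ℝ → M) : Prop :=
  busemann γ (γ' 0) + busemann (negRay γ) (γ' 0) = 0 ∧
  ∀ t : ℝ, busemann γ (γ' t) = busemann γ (γ' 0) - t ∧
    busemann (negRay γ) (γ' t) = busemann (negRay γ) (γ' 0) + t

/-- A geodesic metric space: any two points are joined by a minimizing geodesic
segment. -/
def IsGeodesicSpace (M : Type*) [MetricSpace M] : Prop :=
  ∀ x y : M, ∃ σ : ℝ → M, σ 0 = x ∧ σ (dist x y) = y ∧
    ∀ s t : ℝ, s ∈ Set.Icc 0 (dist x y) → t ∈ Set.Icc 0 (dist x y) →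
      dist (σ s) (σ t) = |s - t|

/-- `γ'` is a coray to the ray `γ`: there are `tᵢ → ∞`, points `xᵢ → γ' 0` and
minimal geodesic segments `cᵢ` from `xᵢ` to `γ (tᵢ)` of length `Tᵢ = d(xᵢ, γ tᵢ) → ∞`
converging to `γ'` uniformly on compact subintervals of `[0, ∞)`. -/
def IsCoray (γ' γ : ℝ → M) : Prop :=
  ∃ (t : ℕ → ℝ) (x : ℕ → M) (c : ℕ → ℝ → M),
    (∀ i, 0 ≤ t i) ∧
    Tendsto t atTop atTop ∧
    Tendsto x atTop (𝓝 (γ' 0)) ∧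
    (∀ i, c i 0 = x i) ∧
    (∀ i, c i (dist (x i) (γ (t i))) = γ (t i)) ∧
    (∀ i, ∀ s s' : ℝ, s ∈ Set.Icc 0 (dist (x i) (γ (t i))) →
      s' ∈ Set.Icc 0 (dist (x i) (γ (t i))) → dist (c i s) (c i s') = |s - s'|) ∧
    Tendsto (fun i => dist (x i) (γ (t i))) atTop atTop ∧
    (∀ K > (0 : ℝ), ∀ ε > (0 : ℝ), ∃ N : ℕ, ∀ i ≥ N,
      ∀ s ∈ Set.Icc (0 : ℝ) K, dist (c i s) (γ' s) < ε)

/-- The line `γ` has the uniqueness property: through each point of the zero set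
of `B_γ` there is at most one line `γ''` with `γ'' ≺ γ`. -/
def HasUniqueCalibLine (γ : ℝ → M) : Prop :=
  ∀ x : M, barrier γ x = 0 →
    ∀ γ₁ γ₂ : ℝ → M, IsLine γ₁ → IsLine γ₂ → γ₁ 0 = x → γ₂ 0 = x →
      Prec γ₁ γ → Prec γ₂ γ → γ₁ = γ₂

section auxlemmas
lemma busemann_def (γ : ℝ → M) (x : M) :
    busemann γ x = ⨅ t : Set.Ici (0 : ℝ), (dist x (γ t) - (t : ℝ)) := rfl

lemma isRay_negRay {γ : ℝ → M} (h : IsLine γ) : IsRay (negRay γ) := by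
  intro s t _ _
  have := h (-s) (-t)
  simp only [negRay]
  rw [this, neg_sub_neg, abs_sub_comm]

lemma busemann_bddBelow {γ : ℝ → M} (hγ : IsRay γ) (x : M) :
    BddBelow (Set.range fun t : Set.Ici (0:ℝ) => dist x (γ t) - (t : ℝ)) := by
  refine ⟨-dist x (γ 0), ?_⟩
  rintro _ ⟨⟨t, ht⟩, rfl⟩
  have h := hγ 0 t le_rfl ht
  rw [zero_sub, abs_neg, abs_of_nonneg ht] at h
  have htr := dist_triangle (γ 0) x (γ t)
  rw [dist_comm (γ 0) x] at htr
  simp only []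
  linarith [h ▸ htr]

lemma busemann_le {γ : ℝ → M} (hγ : IsRay γ) (x : M) {t : ℝ} (ht : 0 ≤ t) :
    busemann γ x ≤ dist x (γ t) - t :=
  ciInf_le (busemann_bddBelow hγ x) ⟨t, ht⟩

lemma busemann_anti {γ : ℝ → M} (hγ : IsRay γ) (x : M) {s t : ℝ}
    (hs : 0 ≤ s) (hst : s ≤ t) : dist x (γ t) - t ≤ dist x (γ s) - s := by
  have h := hγ s t hs (hs.trans hst)
  rw [abs_of_nonpos (by linarith)] at h
  have htr := dist_triangle x (γ s) (γ t)
  linarith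

lemma busemann_tendsto {γ : ℝ → M} (hγ : IsRay γ) (x : M) :
    Tendsto (fun n : ℕ => dist x (γ n) - n) atTop (𝓝 (busemann γ x)) := by
  have hanti : Antitone (fun n : ℕ => dist x (γ n) - (n : ℝ)) := by
    intro m n h
    exact busemann_anti hγ x m.cast_nonneg (by exact_mod_cast h)
  have hbdd : BddBelow (Set.range fun n : ℕ => dist x (γ n) - (n : ℝ)) := by
    refine ⟨-dist x (γ 0), ?_⟩
    rintro _ ⟨n, rfl⟩
    have h := hγ 0 n le_rfl n.cast_nonneg
    rw [zero_sub, abs_neg, abs_of_nonneg n.cast_nonneg] at h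
    have htr := dist_triangle (γ 0) x (γ (n : ℝ))
    rw [dist_comm (γ 0) x] at htr
    simp only []
    linarith [h ▸ htr]
  have := tendsto_atTop_ciInf hanti hbdd
  convert this using 2
  refine le_antisymm (le_ciInf fun n => busemann_le hγ x n.cast_nonneg) ?_
  refine le_ciInf fun ⟨t, ht⟩ => ?_
  calc (⨅ n : ℕ, (dist x (γ n) - (n:ℝ))) ≤ dist x (γ (⌈t⌉₊ : ℕ)) - (⌈t⌉₊ : ℝ) :=
        ciInf_le hbdd ⌈t⌉₊
    _ ≤ dist x (γ t) - t := busemann_anti hγ x ht (Nat.le_ceil t)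

lemma busemann_le_add {γ : ℝ → M} (hγ : IsRay γ) (x y : M) :
    busemann γ x ≤ busemann γ y + dist x y := by
  rw [← sub_le_iff_le_add, busemann_def γ y]
  refine le_ciInf ?_
  rintro ⟨t, ht⟩
  have h1 := busemann_le hγ x ht
  have h2 := dist_triangle x y (γ t)
  simp only []
  linarith

lemma busemann_lipschitz {γ : ℝ → M} (hγ : IsRay γ) : LipschitzWith 1 (busemann γ) := by
  refine LipschitzWith.of_dist_le_mul fun x y => ?_
  rw [Real.dist_eq, NNReal.coe_one, one_mul, abs_sub_le_iff]
  constructor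
  · linarith [busemann_le_add hγ x y]
  · linarith [busemann_le_add hγ y x, dist_comm y x]

lemma barrier_nonneg_aux {γ : ℝ → M} (hγ : IsLine γ) (x : M) :
    0 ≤ busemann γ x + busemann (negRay γ) x := by
  rw [← neg_le_iff_add_nonneg, busemann_def γ x]
  refine le_ciInf ?_
  rintro ⟨t, ht⟩
  rw [neg_le, busemann_def, neg_sub]
  refine le_ciInf ?_
  rintro ⟨s, hs⟩
  have hs' : (0:ℝ) ≤ s := hs
  have ht' : (0:ℝ) ≤ t := ht
  have h := hγ (-s) t
  rw [abs_of_nonpos (by linarith)] at h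
  have htr := dist_triangle (γ (-s)) x (γ t)
  rw [dist_comm (γ (-s)) x] at htr
  simp only [negRay]
  linarith
end auxlemmas

lemma exists_calib_line [ProperSpace M] (hM : IsGeodesicSpace M) {γ : ℝ → M} (hγ : IsLine γ)
    (x : M) (hx : busemann γ x + busemann (negRay γ) x = 0) :
    ∃ γ' : ℝ → M, IsLine γ' ∧ γ' 0 = x ∧ Prec γ' γ := by
  classical
  have hray : IsRay γ := fun s t _ _ => hγ s t
  have hneg : IsRay (negRay γ) := isRay_negRay hγ
  choose σ hσ0 hσd hσiso using fun n : ℕ => hM x (γ n)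
  choose τ hτ0 hτd hτiso using fun n : ℕ => hM x (γ (-(n:ℝ)))
  set f : ℕ → ℝ → M := fun n s =>
    if 0 ≤ s then σ n (min s (dist x (γ n))) else τ n (min (-s) (dist x (γ (-(n:ℝ))))) with hfdef
  -- distance from x bound
  have hfx : ∀ n : ℕ, ∀ s : ℝ, dist (f n s) x ≤ |s| := by
    intro n s
    by_cases h : 0 ≤ s
    · have hm : min s (dist x (γ n)) ∈ Set.Icc 0 (dist x (γ n)) :=
        ⟨le_min h dist_nonneg, min_le_right _ _⟩
      have h0 : (0:ℝ) ∈ Set.Icc 0 (dist x (γ n)) := ⟨le_rfl, dist_nonneg⟩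
      have hiso := hσiso n _ _ hm h0
      rw [hσ0 n] at hiso
      simp only [hfdef, if_pos h]
      rw [hiso, sub_zero, abs_of_nonneg (le_min h dist_nonneg), abs_of_nonneg h]
      exact min_le_left _ _
    · push_neg at h
      have hm : min (-s) (dist x (γ (-(n:ℝ)))) ∈ Set.Icc 0 (dist x (γ (-(n:ℝ)))) :=
        ⟨le_min (by linarith) dist_nonneg, min_le_right _ _⟩
      have h0 : (0:ℝ) ∈ Set.Icc 0 (dist x (γ (-(n:ℝ)))) := ⟨le_rfl, dist_nonneg⟩
      have hiso := hτiso n _ _ hm h0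
      rw [hτ0 n] at hiso
      simp only [hfdef, if_neg (not_le.mpr h)]
      rw [hiso, sub_zero, abs_of_nonneg (le_min (by linarith) dist_nonneg),
        abs_of_nonpos h.le]
      exact min_le_left _ _
  -- eventual lower bounds on the geodesic lengths
  have hev : ∀ K : ℝ, ∀ᶠ n : ℕ in atTop,
      K ≤ dist x (γ n) ∧ K ≤ dist x (γ (-(n:ℝ))) := by
    intro K
    filter_upwards [eventually_ge_atTop ⌈K + dist x (γ 0)⌉₊] with n hn
    have hn' : K + dist x (γ 0) ≤ (n:ℝ) := le_trans (Nat.le_ceil _) (by exact_mod_cast hn)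
    constructor
    · have h := hγ 0 (n:ℝ)
      rw [zero_sub, abs_neg, abs_of_nonneg n.cast_nonneg] at h
      have htr := dist_triangle (γ 0) x (γ (n:ℝ))
      rw [dist_comm (γ 0) x] at htr
      linarith [h ▸ htr]
    · have h := hγ 0 (-(n:ℝ))
      rw [zero_sub, neg_neg, abs_of_nonneg n.cast_nonneg] at h
      have htr := dist_triangle (γ 0) x (γ (-(n:ℝ)))
      rw [dist_comm (γ 0) x] at htr
      linarith [h ▸ htr]
  -- explicit formulas
  have hfpos : ∀ n : ℕ, ∀ s : ℝ, 0 ≤ s → s ≤ dist x (γ n) → f n s = σ n s := by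
    intro n s hs hsd
    simp only [hfdef, if_pos hs, min_eq_left hsd]
  have hfneg : ∀ n : ℕ, ∀ s : ℝ, s ≤ 0 → -s ≤ dist x (γ (-(n:ℝ))) → f n s = τ n (-s) := by
    intro n s hs hsd
    rcases eq_or_lt_of_le hs with h | h
    · subst h
      rw [neg_zero, hτ0 n, hfpos n 0 le_rfl dist_nonneg, hσ0 n]
    · simp only [hfdef, if_neg (not_le.mpr h), min_eq_left hsd]
  -- length of the two sides tends to busemann values
  have hbp : Tendsto (fun n : ℕ => dist x (γ n) - (n:ℝ)) atTop (𝓝 (busemann γ x)) :=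
    busemann_tendsto hray x
  have hbm : Tendsto (fun n : ℕ => dist x (γ (-(n:ℝ))) - (n:ℝ)) atTop
      (𝓝 (busemann (negRay γ) x)) := by
    have := busemann_tendsto hneg x
    simpa [negRay] using this
  have hε : Tendsto (fun n : ℕ => (dist x (γ n) - (n:ℝ)) + (dist x (γ (-(n:ℝ))) - (n:ℝ)))
      atTop (𝓝 0) := by
    have := hbp.add hbm
    rwa [hx] at this
  -- key distance estimates (mixed case)
  have mix : ∀ s t : ℝ, s ≤ 0 → 0 ≤ t → ∀ᶠ n : ℕ in atTop,
      dist (f n s) (f n t) ≤ |s - t| ∧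
      |s - t| - ((dist x (γ n) - (n:ℝ)) + (dist x (γ (-(n:ℝ))) - (n:ℝ)))
        ≤ dist (f n s) (f n t) := by
    intro s t hs ht
    filter_upwards [hev (max |s| |t|)] with n hn
    have hsd : -s ≤ dist x (γ (-(n:ℝ))) :=
      le_trans (le_trans (le_abs_self (-s)) (by rw [abs_neg]; exact le_max_left _ _)) hn.2
    have htd : t ≤ dist x (γ n) :=
      le_trans (le_trans (le_abs_self t) (le_max_right _ _)) hn.1
    rw [hfneg n s hs hsd, hfpos n t ht htd]
    have habs : |s - t| = t - s := by rw [abs_of_nonpos (by linarith)]; ring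
    have hτx : dist (τ n (-s)) x = -s := by
      have hiso := hτiso n (-s) 0 ⟨by linarith, hsd⟩ ⟨le_rfl, dist_nonneg⟩
      rw [hτ0 n] at hiso
      rw [hiso, sub_zero, abs_of_nonneg (by linarith)]
    have hσx : dist x (σ n t) = t := by
      have hiso := hσiso n 0 t ⟨le_rfl, dist_nonneg⟩ ⟨ht, htd⟩
      rw [hσ0 n] at hiso
      rw [hiso, zero_sub, abs_neg, abs_of_nonneg ht]
    have hτend : dist (γ (-(n:ℝ))) (τ n (-s)) = dist x (γ (-(n:ℝ))) + s := by
      have hiso := hτiso n (dist x (γ (-(n:ℝ)))) (-s) ⟨dist_nonneg, le_rfl⟩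
        ⟨by linarith, hsd⟩
      rw [hτd n] at hiso
      rw [hiso, abs_of_nonneg (by linarith)]
      ring
    have hσend : dist (σ n t) (γ (n:ℝ)) = dist x (γ n) - t := by
      have hiso := hσiso n t (dist x (γ n)) ⟨ht, htd⟩ ⟨dist_nonneg, le_rfl⟩
      rw [hσd n] at hiso
      rw [hiso, abs_of_nonpos (by linarith)]
      ring
    constructor
    · have htr := dist_triangle (τ n (-s)) x (σ n t)
      rw [hτx, hσx] at htr
      linarith
    · have hn0 : (0:ℝ) ≤ (n:ℝ) := n.cast_nonneg
      have h2n : dist (γ (-(n:ℝ))) (γ (n:ℝ)) = 2 * n := by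
        rw [hγ (-(n:ℝ)) (n:ℝ), abs_of_nonpos (by linarith)]
        ring
      have htr := dist_triangle4 (γ (-(n:ℝ))) (τ n (-s)) (σ n t) (γ (n:ℝ))
      rw [h2n, hτend, hσend] at htr
      linarith
  -- same-sign estimates
  have same : ∀ s t : ℝ, (0 ≤ s ∧ 0 ≤ t) ∨ (s ≤ 0 ∧ t ≤ 0) → ∀ᶠ n : ℕ in atTop,
      dist (f n s) (f n t) = |s - t| := by
    intro s t hst
    filter_upwards [hev (max |s| |t|)] with n hn
    rcases hst with ⟨hs, ht⟩ | ⟨hs, ht⟩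
    · have hsd : s ≤ dist x (γ n) :=
        le_trans (le_trans (le_abs_self s) (le_max_left _ _)) hn.1
      have htd : t ≤ dist x (γ n) :=
        le_trans (le_trans (le_abs_self t) (le_max_right _ _)) hn.1
      rw [hfpos n s hs hsd, hfpos n t ht htd]
      exact hσiso n s t ⟨hs, hsd⟩ ⟨ht, htd⟩
    · have hsd : -s ≤ dist x (γ (-(n:ℝ))) :=
        le_trans (le_trans (le_abs_self (-s)) (by rw [abs_neg]; exact le_max_left _ _)) hn.2
      have htd : -t ≤ dist x (γ (-(n:ℝ))) :=
        le_trans (le_trans (le_abs_self (-t)) (by rw [abs_neg]; exact le_max_right _ _)) hn.2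
      rw [hfneg n s hs hsd, hfneg n t ht htd]
      rw [hτiso n (-s) (-t) ⟨by linarith, hsd⟩ ⟨by linarith, htd⟩, neg_sub_neg,
        abs_sub_comm]
  have hε0 : ∀ᶠ n : ℕ in atTop,
      0 ≤ (dist x (γ n) - (n:ℝ)) + (dist x (γ (-(n:ℝ))) - (n:ℝ)) := by
    filter_upwards [] with n
    have h := hγ (-(n:ℝ)) (n:ℝ)
    have habs : |(-(n:ℝ)) - (n:ℝ)| = 2 * n := by
      rw [abs_of_nonpos (by linarith [(n.cast_nonneg : (0:ℝ) ≤ (n:ℝ))])]; ring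
    rw [habs] at h
    have htr := dist_triangle (γ (-(n:ℝ))) x (γ (n:ℝ))
    rw [dist_comm (γ (-(n:ℝ))) x] at htr
    linarith [h ▸ htr]
  have key : ∀ s t : ℝ, ∀ᶠ n : ℕ in atTop,
      dist (f n s) (f n t) ≤ |s - t| ∧
      |s - t| - ((dist x (γ n) - (n:ℝ)) + (dist x (γ (-(n:ℝ))) - (n:ℝ)))
        ≤ dist (f n s) (f n t) := by
    intro s t
    rcases le_total 0 s with hs | hs
    · rcases le_total 0 t with ht | ht
      · filter_upwards [same s t (Or.inl ⟨hs, ht⟩), hε0] with n h1 h2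
        exact ⟨le_of_eq h1, by linarith⟩
      · filter_upwards [mix t s ht hs] with n h1
        rw [dist_comm (f n s) (f n t), abs_sub_comm s t]
        exact h1
    · rcases le_total 0 t with ht | ht
      · exact mix s t hs ht
      · filter_upwards [same s t (Or.inr ⟨hs, ht⟩), hε0] with n h1 h2
        exact ⟨le_of_eq h1, by linarith⟩
  -- ultrafilter limit
  obtain ⟨U, hU⟩ := Filter.exists_ultrafilter_le (atTop : Filter ℕ)
  haveI : (↑U : Filter ℕ).NeBot := U.neBot
  have hlim : ∀ s : ℝ, ∃ p : M, Tendsto (fun n => f n s) ↑U (𝓝 p) := by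
    intro s
    obtain ⟨p, -, hp⟩ := (isCompact_closedBall x |s|).ultrafilter_le_nhds
      (U.map fun n => f n s) (by
        rw [Ultrafilter.coe_map, Filter.le_principal_iff]
        exact Filter.mem_map.mpr (Filter.univ_mem'
          fun n => Metric.mem_closedBall.mpr (hfx n s)))
    exact ⟨p, hp⟩
  choose γ' hγ' using hlim
  have hγ'0 : γ' 0 = x := by
    have h1 := hγ' 0
    have h2 : ∀ n : ℕ, f n 0 = x := fun n => by
      rw [hfpos n 0 le_rfl dist_nonneg]; exact hσ0 n
    simp only [h2] at h1
    exact tendsto_nhds_unique h1 tendsto_const_nhds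
  have hline : IsLine γ' := by
    intro s t
    have hd := (hγ' s).dist (hγ' t)
    refine le_antisymm ?_ ?_
    · exact le_of_tendsto hd (((key s t).mono fun n hn => hn.1).filter_mono hU)
    · refine le_of_tendsto_of_tendsto ?_ hd
        (((key s t).mono fun n hn => hn.2).filter_mono hU)
      have : Tendsto (fun n : ℕ =>
          |s - t| - ((dist x (γ n) - (n:ℝ)) + (dist x (γ (-(n:ℝ))) - (n:ℝ))))
          atTop (𝓝 (|s - t| - 0)) := tendsto_const_nhds.sub hε
      rw [sub_zero] at this
      exact this.mono_left hU
  -- continuity of busemann along the limit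
  have hlipP := busemann_lipschitz hray
  have hlipM := busemann_lipschitz hneg
  have hcontP : ∀ t : ℝ, Tendsto (fun n => busemann γ (f n t)) ↑U (𝓝 (busemann γ (γ' t))) :=
    fun t => ((hlipP.continuous.tendsto _).comp (hγ' t))
  have hcontM : ∀ t : ℝ, Tendsto (fun n => busemann (negRay γ) (f n t)) ↑U
      (𝓝 (busemann (negRay γ) (γ' t))) :=
    fun t => ((hlipM.continuous.tendsto _).comp (hγ' t))
  -- calibration upper bounds
  have hupP : ∀ t : ℝ, 0 ≤ t → busemann γ (γ' t) ≤ busemann γ x - t := by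
    intro t ht
    have hevb : ∀ᶠ n : ℕ in atTop,
        busemann γ (f n t) ≤ (dist x (γ n) - (n:ℝ)) - t := by
      filter_upwards [hev |t|] with n hn
      have htd : t ≤ dist x (γ n) := le_trans (le_abs_self t) hn.1
      rw [hfpos n t ht htd]
      have hb := busemann_le hray (σ n t) (n.cast_nonneg : (0:ℝ) ≤ (n:ℝ))
      have hdst : dist (σ n t) (γ (n:ℝ)) = dist x (γ n) - t := by
        have hiso := hσiso n t (dist x (γ n)) ⟨ht, htd⟩ ⟨dist_nonneg, le_rfl⟩
        rw [hσd n] at hiso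
        rw [hiso, abs_of_nonpos (by linarith)]
        ring
      rw [hdst] at hb
      linarith
    refine le_of_tendsto_of_tendsto (hcontP t) ?_ (hevb.filter_mono hU)
    exact ((hbp.sub tendsto_const_nhds).mono_left hU)
  have hupM : ∀ t : ℝ, t ≤ 0 →
      busemann (negRay γ) (γ' t) ≤ busemann (negRay γ) x + t := by
    intro t ht
    have hevb : ∀ᶠ n : ℕ in atTop,
        busemann (negRay γ) (f n t) ≤ (dist x (γ (-(n:ℝ))) - (n:ℝ)) + t := by
      filter_upwards [hev |t|] with n hn
      have htd : -t ≤ dist x (γ (-(n:ℝ))) :=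
        le_trans (by rw [← abs_neg]; exact le_abs_self (-t)) hn.2
      rw [hfneg n t ht htd]
      have hb := busemann_le hneg (τ n (-t)) (n.cast_nonneg : (0:ℝ) ≤ (n:ℝ))
      have hdst : dist (τ n (-t)) (negRay γ (n:ℝ)) = dist x (γ (-(n:ℝ))) + t := by
        show dist (τ n (-t)) (γ (-(n:ℝ))) = _
        have hiso := hτiso n (-t) (dist x (γ (-(n:ℝ)))) ⟨by linarith, htd⟩
          ⟨dist_nonneg, le_rfl⟩
        rw [hτd n] at hiso
        rw [hiso, abs_of_nonpos (by linarith)]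
        ring
      rw [hdst] at hb
      linarith
    refine le_of_tendsto_of_tendsto (hcontM t) ?_ (hevb.filter_mono hU)
    exact ((hbm.add tendsto_const_nhds).mono_left hU)
  refine ⟨γ', hline, hγ'0, ?_, ?_⟩
  · rw [hγ'0]; exact hx
  · intro t
    rw [hγ'0]
    have hdt : dist (γ' t) x = |t| := by
      have h := hline t 0
      rw [hγ'0, sub_zero] at h
      exact h
    have hlp : |busemann γ (γ' t) - busemann γ x| ≤ |t| := by
      have h := hlipP.dist_le_mul (γ' t) x
      rwa [Real.dist_eq, NNReal.coe_one, one_mul, hdt] at h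
    have hlm : |busemann (negRay γ) (γ' t) - busemann (negRay γ) x| ≤ |t| := by
      have h := hlipM.dist_le_mul (γ' t) x
      rwa [Real.dist_eq, NNReal.coe_one, one_mul, hdt] at h
    rw [abs_le] at hlp hlm
    have hpos1 := barrier_nonneg_aux hγ (γ' t)
    rcases le_total 0 t with ht | ht
    · have h1 := hupP t ht
      have habs : |t| = t := abs_of_nonneg ht
      rw [habs] at hlp hlm
      have e1 : busemann γ (γ' t) = busemann γ x - t := by linarith [hlp.1]
      exact ⟨e1, by linarith [hlm.2, hpos1]⟩
    · have h1 := hupM t ht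
      have habs : |t| = -t := abs_of_nonpos ht
      rw [habs] at hlp hlm
      have e2 : busemann (negRay γ) (γ' t) = busemann (negRay γ) x + t := by
        linarith [hlm.1]
      exact ⟨by linarith [hlp.2, hpos1], e2⟩


/-- in a proper geodesic space, through each point of the zero set
`G_γ` of the barrier function of a line `γ` there passes a line `γ' ≺ γ`; in
particular `G_γ` is the union of the images of such lines. -/
theorem busemann_barrier_zero_set_foliated [ProperSpace M] (hM : IsGeodesicSpace M)
    (γ : ℝ → M) (hγ : IsLine γ) :
    (∀ x : M, barrier γ x = 0 → ∃ γ' : ℝ → M, IsLine γ' ∧ γ' 0 = x ∧ Prec γ' γ) ∧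
    {y : M | barrier γ y = 0} =
      ⋃ γ' ∈ {c : ℝ → M | IsLine c ∧ Prec c γ}, Set.range γ' := by
  have main : ∀ x : M, barrier γ x = 0 → ∃ γ' : ℝ → M, IsLine γ' ∧ γ' 0 = x ∧ Prec γ' γ :=
    fun x hx => exists_calib_line hM hγ x hx
  refine ⟨main, ?_⟩
  ext y
  simp only [Set.mem_setOf_eq, Set.mem_iUnion, Set.mem_range]
  constructor
  · intro hy
    obtain ⟨γ', h1, h2, h3⟩ := main y hy
    exact ⟨γ', ⟨h1, h3⟩, 0, h2⟩
  · rintro ⟨γ', ⟨h1, h2⟩, t, rfl⟩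
    have h4 := h2.2 t
    have h5 := h2.1
    show busemann γ (γ' t) + busemann (negRay γ) (γ' t) = 0
    rw [h4.1, h4.2]
    linarith
end

section
/- Let (M, d) be a metric space. The relation ≺ on lines in M is transitive: if γ₃ ≺ γ₂ and γ₂ ≺ γ₁ then γ₃ ≺ γ₁. Consequently, the relation ∼ (defined by γ′ ∼ γ iff γ′ ≺ γ and γ ≺ γ′) is an equivalence relation on the set of lines in M. -/
open Filter Topology

variable {M : Type*} [MetricSpace M]

lemma negRay_isLine {γ : ℝ → M} (h : IsLine γ) : IsLine (negRay γ) := by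
  intro s t
  show dist (γ (-s)) (γ (-t)) = |s - t|
  rw [h, show (-s - -t) = (t - s) by ring, abs_sub_comm]

lemma buse_bdd {γ : ℝ → M} (h : IsLine γ) (x : M) :
    BddBelow (Set.range fun t : Set.Ici (0:ℝ) => dist x (γ t) - (t : ℝ)) := by
  refine ⟨-dist x (γ 0), ?_⟩
  rintro _ ⟨⟨t, ht⟩, rfl⟩
  have ht' : (0:ℝ) ≤ t := ht
  have h1 := dist_triangle (γ 0) x (γ t)
  have h2 := h 0 t
  rw [abs_of_nonpos (by linarith : (0:ℝ) - t ≤ 0)] at h2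
  rw [dist_comm (γ 0) x] at h1
  simp only
  linarith

lemma buse_lip {γ : ℝ → M} (h : IsLine γ) (x y : M) :
    busemann γ x ≤ dist x y + busemann γ y := by
  have hb := buse_bdd h x
  have key : busemann γ x - dist x y ≤ busemann γ y := by
    apply le_ciInf
    intro t
    have h1 : busemann γ x ≤ dist x (γ t) - (t : ℝ) := ciInf_le hb t
    have h2 := dist_triangle x y (γ t)
    linarith
  linarith

lemma buse_le_of_calib {δ c : ℝ → M} (hδ : IsLine δ) {A : ℝ}
    (hc : ∀ s : ℝ, busemann δ (c s) = A - s) (x : M) :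
    busemann δ x ≤ busemann c x + A := by
  have key : busemann δ x - A ≤ busemann c x := by
    apply le_ciInf
    intro t
    have h1 := buse_lip hδ x (c t)
    rw [hc t] at h1
    linarith
  linarith

lemma barrier_nonneg' {γ : ℝ → M} (h : IsLine γ) (x : M) :
    0 ≤ busemann γ x + busemann (negRay γ) x := by
  have key : -busemann (negRay γ) x ≤ busemann γ x := by
    apply le_ciInf
    rintro ⟨t, ht⟩
    have ht' : (0:ℝ) ≤ t := ht
    rw [neg_le]
    apply le_ciInf
    rintro ⟨s, hs⟩
    have hs' : (0:ℝ) ≤ s := hs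
    have h1 := dist_triangle (γ (-s)) x (γ t)
    have h2 := h (-s) t
    rw [abs_of_nonpos (by linarith : -s - t ≤ 0)] at h2
    rw [dist_comm (γ (-s)) x] at h1
    show -(dist x (γ t) - t) ≤ dist x (γ (-s)) - s
    linarith
  linarith

lemma buse_self {γ : ℝ → M} (h : IsLine γ) (u : ℝ) : busemann γ (γ u) = -u := by
  apply le_antisymm
  · have h1 : busemann γ (γ u) ≤ dist (γ u) (γ (max u 0)) - max u 0 :=
      ciInf_le (buse_bdd h _) ⟨max u 0, le_max_right u 0⟩
    rw [h] at h1
    rcases le_total u 0 with hu | hu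
    · rw [max_eq_right hu] at h1
      rw [abs_of_nonpos (by linarith : u - 0 ≤ 0)] at h1
      linarith
    · rw [max_eq_left hu] at h1
      simp at h1
      linarith
  · apply le_ciInf
    rintro ⟨t, ht⟩
    have h2 := le_abs_self ((t : ℝ) - u)
    rw [abs_sub_comm] at h2
    show -u ≤ dist (γ u) (γ t) - t
    rw [h]
    linarith

lemma prec_refl' {γ : ℝ → M} (h : IsLine γ) : Prec γ γ := by
  have hn := negRay_isLine h
  have h2 : ∀ u : ℝ, busemann (negRay γ) (γ u) = u := by
    intro u
    have h3 := buse_self hn (-u)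
    simpa [negRay] using h3
  refine ⟨by rw [buse_self h 0, h2 0]; ring, fun t => ?_⟩
  rw [buse_self h, buse_self h, h2, h2]
  constructor <;> ring

lemma prec_trans' {γ₁ γ₂ γ₃ : ℝ → M} (h1 : IsLine γ₁) (h2 : IsLine γ₂)
    (h32 : Prec γ₃ γ₂) (h21 : Prec γ₂ γ₁) : Prec γ₃ γ₁ := by
  obtain ⟨hz2, hcal2⟩ := h32
  obtain ⟨hz1, hcal1⟩ := h21
  set a := busemann γ₁ (γ₂ 0) with ha
  set a' := busemann (negRay γ₁) (γ₂ 0) with ha'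
  set c := busemann γ₂ (γ₃ 0) with hc
  set c' := busemann (negRay γ₂) (γ₃ 0) with hc'
  have hA : ∀ s : ℝ, busemann γ₁ (γ₂ s) = a - s := fun s => (hcal1 s).1
  have hA' : ∀ s : ℝ, busemann (negRay γ₁) ((negRay γ₂) s) = a' - s := by
    intro s
    have h3 := (hcal1 (-s)).2
    show busemann (negRay γ₁) (γ₂ (-s)) = a' - s
    linarith
  have key1 : ∀ x, busemann γ₁ x ≤ busemann γ₂ x + a :=
    fun x => buse_le_of_calib h1 hA x
  have key2 : ∀ x, busemann (negRay γ₁) x ≤ busemann (negRay γ₂) x + a' :=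
    fun x => buse_le_of_calib (negRay_isLine h1) hA' x
  have heq : ∀ t : ℝ, busemann γ₁ (γ₃ t) = a + c - t ∧
      busemann (negRay γ₁) (γ₃ t) = a' + c' + t := by
    intro t
    have e1 := key1 (γ₃ t); rw [(hcal2 t).1] at e1
    have e2 := key2 (γ₃ t); rw [(hcal2 t).2] at e2
    have hnn := barrier_nonneg' h1 (γ₃ t)
    constructor <;> linarith
  obtain ⟨f1, f2⟩ := heq 0
  refine ⟨by rw [f1, f2]; linarith, fun t => ?_⟩
  obtain ⟨e1, e2⟩ := heq t
  rw [e1, e2, f1, f2]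
  constructor <;> ring

/-- `≺` is transitive on lines, hence `∼` is an equivalence relation
on the set of lines. -/
theorem prec_trans_and_sim_equivalence (M : Type*) [MetricSpace M] :
    (∀ γ₁ γ₂ γ₃ : ℝ → M, IsLine γ₁ → IsLine γ₂ → IsLine γ₃ →
      Prec γ₃ γ₂ → Prec γ₂ γ₁ → Prec γ₃ γ₁) ∧
    Equivalence (fun γ' γ : {c : ℝ → M // IsLine c} => Prec γ'.1 γ.1 ∧ Prec γ.1 γ'.1) := by
  refine ⟨fun γ₁ γ₂ γ₃ hL1 hL2 _ h32 h21 => prec_trans' hL1 hL2 h32 h21, ?_, ?_, ?_⟩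
  · exact fun γ => ⟨prec_refl' γ.2, prec_refl' γ.2⟩
  · exact fun h => ⟨h.2, h.1⟩
  · rintro x y z ⟨hxy, hyx⟩ ⟨hyz, hzy⟩
    exact ⟨prec_trans' z.2 y.2 hxy hyz, prec_trans' x.2 y.2 hzy hyx⟩
end

section
/- Let (M, d) be a metric space and let γ₁, γ₂ be rays in M with γ₁(0) = γ₂(0). Then b_{γ₁}(x) + b_{γ₂}(x) ≥ 0 for all x ∈ M if and only if the map γ′ : ℝ → M defined by γ′(t) = γ₁(t) for t ≥ 0 and γ′(t) = γ₂(−t) for t ≤ 0 is a line, i.e. d(γ′(s), γ′(t)) = |s − t| for all s, t ∈ ℝ. -/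
open Filter Topology

variable {M : Type*} [MetricSpace M]

/-!
Both sides are equivalent to `d(γ₁ s, γ₂ u) = s + u` for all `s, u ≥ 0`; for the line this is
just its mixed case. The triangle inequality through the common origin always gives `≤`.
Evaluating `b_{γ₁} + b_{γ₂} ≥ 0` at `γ₂ u`, where `b_{γ₂}(γ₂ u) ≤ -u` and
`b_{γ₁}(γ₂ u) ≤ d(γ₂ u, γ₁ s) - s`, gives `≥`. Conversely, the triangle inequality through `x`
turns `d(γ₁ s, γ₂ u) = s + u` into `(d(x, γ₁ s) - s) + (d(x, γ₂ u) - u) ≥ 0`, and taking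
infima gives `b_{γ₁}(x) + b_{γ₂}(x) ≥ 0`.
-/

namespace IsRay

variable {γ : ℝ → M}

lemma bddBelow_busemann (hγ : IsRay γ) (x : M) :
    BddBelow (Set.range fun t : Set.Ici (0 : ℝ) => dist x (γ t) - (t : ℝ)) := by
  refine ⟨-dist x (γ 0), ?_⟩
  rintro _ ⟨⟨t, ht⟩, rfl⟩
  have ht' : dist (γ 0) (γ t) = t := by
    rw [hγ 0 t le_rfl ht, zero_sub, abs_neg, abs_of_nonneg ht]
  have := dist_triangle (γ 0) x (γ t)
  rw [dist_comm (γ 0) x] at this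
  dsimp only
  linarith

lemma busemann_le (hγ : IsRay γ) (x : M) {s : ℝ} (hs : 0 ≤ s) :
    busemann γ x ≤ dist x (γ s) - s :=
  ciInf_le (hγ.bddBelow_busemann x) (⟨s, hs⟩ : Set.Ici (0 : ℝ))

lemma busemann_apply_le (hγ : IsRay γ) {u : ℝ} (hu : 0 ≤ u) : busemann γ (γ u) ≤ -u := by
  simpa using hγ.busemann_le (γ u) hu

lemma dist_le_add {γ₂ : ℝ → M} (h₁ : IsRay γ) (h₂ : IsRay γ₂) (h0 : γ 0 = γ₂ 0)
    {s u : ℝ} (hs : 0 ≤ s) (hu : 0 ≤ u) : dist (γ s) (γ₂ u) ≤ s + u :=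
  calc dist (γ s) (γ₂ u) ≤ dist (γ s) (γ 0) + dist (γ 0) (γ₂ u) := dist_triangle _ _ _
    _ = s + u := by
      rw [h₁ s 0 hs le_rfl, h0, h₂ 0 u le_rfl hu, sub_zero, zero_sub, abs_neg,
        abs_of_nonneg hs, abs_of_nonneg hu]

end IsRay

lemma add_le_dist_of_busemann_add_nonneg {γ₁ γ₂ : ℝ → M} (h₁ : IsRay γ₁) (h₂ : IsRay γ₂)
    (hb : ∀ x, 0 ≤ busemann γ₁ x + busemann γ₂ x) {s u : ℝ} (hs : 0 ≤ s) (hu : 0 ≤ u) :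
    s + u ≤ dist (γ₁ s) (γ₂ u) := by
  have h₁s := h₁.busemann_le (γ₂ u) hs
  rw [dist_comm] at h₁s
  linarith [hb (γ₂ u), h₂.busemann_apply_le hu]

lemma busemann_add_nonneg_of_add_le_dist {γ₁ γ₂ : ℝ → M}
    (h : ∀ s u : ℝ, 0 ≤ s → 0 ≤ u → s + u ≤ dist (γ₁ s) (γ₂ u)) (x : M) :
    0 ≤ busemann γ₁ x + busemann γ₂ x := by
  suffices -busemann γ₂ x ≤ busemann γ₁ x by linarith
  refine le_ciInf fun ⟨s, hs⟩ => ?_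
  rw [neg_le, neg_sub]
  refine le_ciInf fun ⟨u, hu⟩ => ?_
  have := dist_triangle (γ₁ s) x (γ₂ u)
  rw [dist_comm (γ₁ s) x] at this
  dsimp only
  linarith [h s u hs hu]

lemma busemann_add_nonneg_iff_dist_eq_add {γ₁ γ₂ : ℝ → M} (h₁ : IsRay γ₁) (h₂ : IsRay γ₂)
    (h0 : γ₁ 0 = γ₂ 0) :
    (∀ x, 0 ≤ busemann γ₁ x + busemann γ₂ x) ↔
      ∀ s u : ℝ, 0 ≤ s → 0 ≤ u → dist (γ₁ s) (γ₂ u) = s + u := by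
  refine ⟨fun hb s u hs hu => ?_, fun h => busemann_add_nonneg_of_add_le_dist
    fun s u hs hu => (h s u hs hu).ge⟩
  exact le_antisymm (h₁.dist_le_add h₂ h0 hs hu) (add_le_dist_of_busemann_add_nonneg h₁ h₂ hb hs hu)

lemma isLine_concat_iff_dist_eq_add {γ₁ γ₂ γ' : ℝ → M} (h₁ : IsRay γ₁) (h₂ : IsRay γ₂)
    (h0 : γ₁ 0 = γ₂ 0) (hγ' : ∀ t : ℝ, γ' t = if 0 ≤ t then γ₁ t else γ₂ (-t)) :
    IsLine γ' ↔ ∀ s u : ℝ, 0 ≤ s → 0 ≤ u → dist (γ₁ s) (γ₂ u) = s + u := by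
  have pos {t : ℝ} (ht : 0 ≤ t) : γ' t = γ₁ t := by rw [hγ', if_pos ht]
  have neg {t : ℝ} (ht : t ≤ 0) : γ' t = γ₂ (-t) := by
    rcases ht.lt_or_eq with ht | rfl
    · rw [hγ', if_neg ht.not_ge]
    · rw [pos le_rfl, h0, neg_zero]
  constructor
  · intro hl s u hs hu
    have := hl s (-u)
    rwa [pos hs, neg (neg_nonpos.mpr hu), neg_neg, sub_neg_eq_add,
      abs_of_nonneg (add_nonneg hs hu)] at this
  · intro h s t
    wlog hts : t ≤ s generalizing s t
    · rw [dist_comm, abs_sub_comm]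
      exact this t s (le_of_not_ge hts)
    rcases le_total 0 t with ht | ht
    · rw [pos ht, pos (ht.trans hts)]
      exact h₁ s t (ht.trans hts) ht
    rcases le_total 0 s with hs | hs
    · rw [pos hs, neg ht, h s (-t) hs (neg_nonneg.mpr ht), ← sub_eq_add_neg,
        abs_of_nonneg (sub_nonneg.mpr hts)]
    · rw [neg hs, neg ht, h₂ (-s) (-t) (neg_nonneg.mpr hs) (neg_nonneg.mpr ht), neg_sub_neg,
        abs_sub_comm]

/-- for two rays `γ₁, γ₂` from the same point, `b_{γ₁} + b_{γ₂} ≥ 0`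
iff the concatenation `γ'(t) = γ₁ t` for `t ≥ 0`, `γ'(t) = γ₂ (-t)` for `t ≤ 0` is
a line. -/
theorem busemann_sum_nonneg_iff_concat_isLine (γ₁ γ₂ : ℝ → M)
    (h₁ : IsRay γ₁) (h₂ : IsRay γ₂) (h0 : γ₁ 0 = γ₂ 0)
    (γ' : ℝ → M) (hγ' : ∀ t : ℝ, γ' t = if 0 ≤ t then γ₁ t else γ₂ (-t)) :
    (∀ x : M, 0 ≤ busemann γ₁ x + busemann γ₂ x) ↔ IsLine γ' :=
  (busemann_add_nonneg_iff_dist_eq_add h₁ h₂ h0).trans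
    (isLine_concat_iff_dist_eq_add h₁ h₂ h0 hγ').symm
end
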